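/- arXiv:2306.06134 — 2 statements merged into one kernel-verified Lean document; each statement's English description precedes it below -/
import Mathlib

section
/- Baseline invariance fails for path methods on a linear function: let F : ℝ² → ℝ be F(x₁, x₂) = x₁ − x₂, let x'₁ = (−1, −1) and x'₂ = (1, 1) (so that F(x'₁) = F(x'₂) = 0), and let x_t = (1, 0). Then for any continuously differentiable paths γ₁, γ₂ : [0,1] → ℝ² with γ₁(0) = x'₁, γ₂(0) = x'₂ and γ₁(1) = γ₂(1) = x_t, the path-method attributions satisfy A^{γ₁}_2(x_t, F, x'₁) < A^{γ₁}_1(x_t, F, x'₁) while A^{γ₂}_1(x_t, F, x'₂) < A^{γ₂}_2(x_t, F, x'₂); that is, the rank order of the two coordinates switches between the two baselines. -/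
/-- The path-method attribution to coordinate `i`:
`A^γ_i(x, F, x') = ∫₀¹ ∂ᵢF(γ(t)) γᵢ'(t) dt`. -/
noncomputable def pathAttr {n : ℕ} (F : (Fin n → ℝ) → ℝ) (γ : ℝ → Fin n → ℝ)
    (i : Fin n) : ℝ :=
  ∫ t in (0:ℝ)..1, fderiv ℝ F (γ t) (Pi.single i 1) * deriv (fun s => γ s i) t

noncomputable def Lmap : (Fin 2 → ℝ) →L[ℝ] ℝ :=
  ContinuousLinearMap.proj (R := ℝ) (φ := fun _ : Fin 2 => ℝ) 0 -
  ContinuousLinearMap.proj (R := ℝ) (φ := fun _ : Fin 2 => ℝ) 1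

lemma ftc_aux (γ : ℝ → Fin 2 → ℝ) (hγ : ContDiff ℝ 1 γ) (i : Fin 2) :
    ∫ t in (0:ℝ)..1, deriv (fun s => γ s i) t = γ 1 i - γ 0 i := by
  have hi : ContDiff ℝ 1 (fun s => γ s i) :=
    (ContinuousLinearMap.proj (R := ℝ) (φ := fun _ : Fin 2 => ℝ) i).contDiff.comp hγ
  exact intervalIntegral.integral_deriv_eq_sub
    (fun x _ => (hi.differentiable one_ne_zero).differentiableAt)
    ((hi.continuous_deriv le_rfl).intervalIntegrable 0 1)

lemma attr_eq (F : (Fin 2 → ℝ) → ℝ) (hF : ∀ y : Fin 2 → ℝ, F y = y 0 - y 1)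
    (γ : ℝ → Fin 2 → ℝ) (hγ : ContDiff ℝ 1 γ) (i : Fin 2) :
    pathAttr F γ i = ((Pi.single i 1 : Fin 2 → ℝ) 0 - (Pi.single i 1 : Fin 2 → ℝ) 1) * (γ 1 i - γ 0 i) := by
  have hFfun : F = fun y => y 0 - y 1 := funext hF
  have hderiv : ∀ y, fderiv ℝ F y = Lmap := by
    intro y
    rw [hFfun]
    exact (Lmap.hasFDerivAt (x := y)).fderiv
  have hL : ∀ y, Lmap y = y 0 - y 1 := fun _ => rfl
  unfold pathAttr
  simp_rw [hderiv, hL]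
  rw [intervalIntegral.integral_const_mul, ftc_aux γ hγ i]

/-- Baseline invariance fails for path methods on the linear function `F(x₁,x₂)=x₁-x₂`:
starting from baseline `(-1,-1)` the attribution to coordinate 2 is strictly less than
that to coordinate 1, while from baseline `(1,1)` the order switches. -/
theorem stmt_6 (F : (Fin 2 → ℝ) → ℝ) (hF : ∀ y : Fin 2 → ℝ, F y = y 0 - y 1)
    (γ₁ γ₂ : ℝ → Fin 2 → ℝ) (hγ₁ : ContDiff ℝ 1 γ₁) (hγ₂ : ContDiff ℝ 1 γ₂)
    (h10 : γ₁ 0 = ![(-1 : ℝ), -1]) (h20 : γ₂ 0 = ![(1 : ℝ), 1])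
    (h11 : γ₁ 1 = ![(1 : ℝ), 0]) (h21 : γ₂ 1 = ![(1 : ℝ), 0]) :
    pathAttr F γ₁ 1 < pathAttr F γ₁ 0 ∧ pathAttr F γ₂ 0 < pathAttr F γ₂ 1 := by
  rw [attr_eq F hF γ₁ hγ₁ 0, attr_eq F hF γ₁ hγ₁ 1,
      attr_eq F hF γ₂ hγ₂ 0, attr_eq F hF γ₂ hγ₂ 1,
      h10, h20, h11, h21]
  norm_num
end

section
/- Convex combinations of path methods also violate baseline invariance on a linear function: let F : ℝ² → ℝ be F(x₁, x₂) = x₁ − x₂, x'₁ = (−1, −1), x'₂ = (1, 1), and x_t = (1, 0). Suppose a₁ ∈ ℝ² is a finite convex combination a₁ = ∑_{k=1}^m λ_k A^{γ^k}(x_t, F, x'₁) where λ_k ≥ 0, ∑_k λ_k = 1, and each γ^k : [0,1] → ℝ² is a continuously differentiable path from x'₁ to x_t; and suppose a₂ ∈ ℝ² is similarly a finite convex combination of path-method attributions along continuously differentiable paths from x'₂ to x_t. Then a₁ = (2, −1) and a₂ = (0, 1), so the second coordinate's attribution is strictly less than the first coordinate's at baseline x'₁ but strictly greater at baseline x'₂.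 -/
/-! For a linear `F` the gradient is constant, so the path integral of coordinate `i` is that
constant times `∫₀¹ γᵢ'`, which by the fundamental theorem of calculus depends only on the
endpoints. Hence every path method, and so every convex combination of path methods, gives the
same attribution, and for `F(x₁, x₂) = x₁ - x₂` it can be read off directly at both baselines. -/

theorem pathAttr_continuousLinearMap {n : ℕ} (L : (Fin n → ℝ) →L[ℝ] ℝ) {γ : ℝ → Fin n → ℝ}
    (hγ : ContDiff ℝ 1 γ) (i : Fin n) :
    pathAttr L γ i = L (Pi.single i 1) * (γ 1 i - γ 0 i) := by
  have hγi : ContDiff ℝ 1 (fun s => γ s i) := (contDiff_apply ℝ ℝ i).comp hγ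
  simp only [pathAttr, L.fderiv, intervalIntegral.integral_const_mul]
  congr 1
  exact intervalIntegral.integral_deriv_eq_sub
    (fun t _ => (hγi.differentiable one_ne_zero).differentiableAt)
    ((hγi.continuous_deriv le_rfl).intervalIntegrable 0 1)

theorem sum_mul_pathAttr_continuousLinearMap {n : ℕ} {ι : Type*} [Fintype ι]
    (L : (Fin n → ℝ) →L[ℝ] ℝ) (w : ι → ℝ) (hw : ∑ k, w k = 1) (γ : ι → ℝ → Fin n → ℝ)
    (hγ : ∀ k, ContDiff ℝ 1 (γ k)) {x' x : Fin n → ℝ} (hγ0 : ∀ k, γ k 0 = x')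
    (hγ1 : ∀ k, γ k 1 = x) (i : Fin n) :
    ∑ k, w k * pathAttr L (γ k) i = L (Pi.single i 1) * (x i - x' i) := by
  simp only [pathAttr_continuousLinearMap L (hγ _), hγ0, hγ1, ← Finset.sum_mul, hw, one_mul]

theorem stmt_8_general (F : (Fin 2 → ℝ) → ℝ) (hF : ∀ y : Fin 2 → ℝ, F y = y 0 - y 1)
    (m₁ m₂ : ℕ)
    (lam : Fin m₁ → ℝ) (hlam1 : ∑ k, lam k = 1)
    (mu : Fin m₂ → ℝ) (hmu1 : ∑ k, mu k = 1)
    (γ : Fin m₁ → ℝ → Fin 2 → ℝ) (hγ : ∀ k, ContDiff ℝ 1 (γ k))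
    (hγ0 : ∀ k, γ k 0 = ![(-1 : ℝ), -1]) (hγ1 : ∀ k, γ k 1 = ![(1 : ℝ), 0])
    (η : Fin m₂ → ℝ → Fin 2 → ℝ) (hη : ∀ k, ContDiff ℝ 1 (η k))
    (hη0 : ∀ k, η k 0 = ![(1 : ℝ), 1]) (hη1 : ∀ k, η k 1 = ![(1 : ℝ), 0])
    (a₁ a₂ : Fin 2 → ℝ)
    (ha₁ : ∀ i, a₁ i = ∑ k, lam k * pathAttr F (γ k) i)
    (ha₂ : ∀ i, a₂ i = ∑ k, mu k * pathAttr F (η k) i) :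
    a₁ 0 = 2 ∧ a₁ 1 = -1 ∧ a₂ 0 = 0 ∧ a₂ 1 = 1 ∧ a₁ 1 < a₁ 0 ∧ a₂ 0 < a₂ 1 := by
  let L : (Fin 2 → ℝ) →L[ℝ] ℝ := .proj 0 - .proj 1
  have hFL : F = L := funext fun y => by simp [L, hF]
  subst hFL
  have h₁ := fun i => (ha₁ i).trans
    (sum_mul_pathAttr_continuousLinearMap L lam hlam1 γ hγ hγ0 hγ1 i)
  have h₂ := fun i => (ha₂ i).trans
    (sum_mul_pathAttr_continuousLinearMap L mu hmu1 η hη hη0 hη1 i)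
  simp only [L, h₁, h₂]
  norm_num

/-- Convex combinations of path methods violate baseline invariance on the linear
function `F(x₁,x₂) = x₁ - x₂`: any convex combination `a₁` of path-method attributions
along paths from `(-1,-1)` to `(1,0)` equals `(2,-1)`, any convex combination `a₂`
along paths from `(1,1)` to `(1,0)` equals `(0,1)`, and the rank order switches. -/
theorem stmt_8 (F : (Fin 2 → ℝ) → ℝ) (hF : ∀ y : Fin 2 → ℝ, F y = y 0 - y 1)
    (m₁ m₂ : ℕ)
    (lam : Fin m₁ → ℝ) (hlam : ∀ k, 0 ≤ lam k) (hlam1 : ∑ k, lam k = 1)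
    (mu : Fin m₂ → ℝ) (hmu : ∀ k, 0 ≤ mu k) (hmu1 : ∑ k, mu k = 1)
    (γ : Fin m₁ → ℝ → Fin 2 → ℝ) (hγ : ∀ k, ContDiff ℝ 1 (γ k))
    (hγ0 : ∀ k, γ k 0 = ![(-1 : ℝ), -1]) (hγ1 : ∀ k, γ k 1 = ![(1 : ℝ), 0])
    (η : Fin m₂ → ℝ → Fin 2 → ℝ) (hη : ∀ k, ContDiff ℝ 1 (η k))
    (hη0 : ∀ k, η k 0 = ![(1 : ℝ), 1]) (hη1 : ∀ k, η k 1 = ![(1 : ℝ), 0])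
    (a₁ a₂ : Fin 2 → ℝ)
    (ha₁ : ∀ i, a₁ i = ∑ k, lam k * pathAttr F (γ k) i)
    (ha₂ : ∀ i, a₂ i = ∑ k, mu k * pathAttr F (η k) i) :
    a₁ 0 = 2 ∧ a₁ 1 = -1 ∧ a₂ 0 = 0 ∧ a₂ 1 = 1 ∧ a₁ 1 < a₁ 0 ∧ a₂ 0 < a₂ 1 :=
  stmt_8_general F hF m₁ m₂ lam hlam1 mu hmu1 γ hγ hγ0 hγ1 η hη hη0 hη1 a₁ a₂ ha₁ ha₂
end
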